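/- arXiv:hep-th/0604120 — 2 statements merged into one kernel-verified Lean document; each statement's English description precedes it below -/
import Mathlib

section
/- (Partial-trace characterization of noiseless subsystems.) Let H = (H^A ⊗ H^B) ⊕ K be a finite-dimensional complex Hilbert space decomposition, with H^A = ℂ^A, H^B = ℂ^B and index type (A × B) ⊕ K for H, and let Φ be a quantum channel (completely positive trace-preserving linear map) on the matrix algebra B(H). Then B is noiseless for Φ — i.e. for all operators σ^A on H^A and σ^B on H^B there exists an operator τ^A on H^A with Φ(σ^A ⊗ σ^B) = τ^A ⊗ σ^B (operators on H^A ⊗ H^B being extended to H by zero on K) — if and only if Tr_A ∘ Φ ∘ 𝒫^{AB} = Tr_A ∘ 𝒫^{AB} as maps from B(H) to B(H^B). -/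
/-!
If `B` is noiseless, `Φ (σA ⊗ σB) = τA ⊗ σB` with `tr τA = tr σA` by trace preservation (when
`tr σB ≠ 0`, and then for all `σB` by linearity), so `Tr_A ∘ Φ` agrees with `Tr_A` on product
operators, which span `B(H^A ⊗ H^B)`.

Conversely, fix `σA ≥ 0`. The block matrix `(σA ⊗ |b⟩⟨b'|)_{b,b'}` is positive, hence so is
`Y = (Φ (σA ⊗ |b⟩⟨b'|))_{b,b'}` by complete positivity. The partial-trace condition and trace
preservation make the diagonal of `Y` vanish off the entries at `(b, (a, b))`, and make the
quadratic form of `Y` vanish at `e_(b,(a,b)) - e_(b',(a,b'))`. For a positive matrix this forces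
the corresponding rows and columns to vanish, resp. to coincide, which says exactly that
`Φ (σA ⊗ |b⟩⟨b'|) = τA ⊗ |b⟩⟨b'|` for a single `τA`. Positive matrices span `B(H^A)`.
-/

open Matrix
open scoped ComplexOrder Kronecker

/-- The tensor extension `id_k ⊗ Φ` of a linear map between matrix algebras, via the
Kronecker-product identification. -/
def tensorExt {ι₁ ι₂ : Type*} [Fintype ι₁] [Fintype ι₂]
    (Φ : Matrix ι₁ ι₁ ℂ →ₗ[ℂ] Matrix ι₂ ι₂ ℂ)
    (k : ℕ) (M : Matrix (Fin k × ι₁) (Fin k × ι₁) ℂ) :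
    Matrix (Fin k × ι₂) (Fin k × ι₂) ℂ :=
  Matrix.of fun p q => Φ (Matrix.of fun a b => M (p.1, a) (q.1, b)) p.2 q.2

/-- Complete positivity of a linear map between matrix algebras. -/
def IsCompletelyPositive {ι₁ ι₂ : Type*} [Fintype ι₁] [Fintype ι₂]
    (Φ : Matrix ι₁ ι₁ ℂ →ₗ[ℂ] Matrix ι₂ ι₂ ℂ) : Prop :=
  ∀ (k : ℕ) (M : Matrix (Fin k × ι₁) (Fin k × ι₁) ℂ),
    M.PosSemidef → (tensorExt Φ k M).PosSemidef

variable {A B K : Type*}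

/-- An operator on `H^A ⊗ H^B`, regarded as an operator on `H = (H^A ⊗ H^B) ⊕ K`
that is zero on `K`. -/
def embedAB (M : Matrix (A × B) (A × B) ℂ) :
    Matrix ((A × B) ⊕ K) ((A × B) ⊕ K) ℂ :=
  Matrix.fromBlocks M 0 0 0

/-- The orthogonal projection `P^{AB}` of `H = (H^A ⊗ H^B) ⊕ K` onto `H^A ⊗ H^B`. -/
def projAB [DecidableEq A] [DecidableEq B] :
    Matrix ((A × B) ⊕ K) ((A × B) ⊕ K) ℂ :=
  Matrix.fromBlocks 1 0 0 0

/-- The partial trace over `A` applied to the `H^A ⊗ H^B` block of an operator on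
`H = (H^A ⊗ H^B) ⊕ K`. -/
noncomputable def trA [Fintype A] (M : Matrix ((A × B) ⊕ K) ((A × B) ⊕ K) ℂ) : Matrix B B ℂ :=
  Matrix.of fun b b' => ∑ a : A, M (Sum.inl (a, b)) (Sum.inl (a, b'))

namespace Matrix

lemma star_single_sub_single_dotProduct_mulVec {n R : Type*} [Fintype n] [DecidableEq n]
    [Ring R] [StarRing R] (Y : Matrix n n R) (p q : n) :
    star (Pi.single p 1 - Pi.single q 1 : n → R) ⬝ᵥ Y *ᵥ (Pi.single p 1 - Pi.single q 1) =
      Y p p + Y q q - Y p q - Y q p := by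
  simp only [star_sub, Pi.star_single, star_one, mulVec_sub, mulVec_single_one, dotProduct_sub,
    sub_dotProduct, single_one_dotProduct, col_apply]
  abel

lemma span_posSemidef_eq_top {n : Type*} [Fintype n] [DecidableEq n] :
    Submodule.span ℂ {M : Matrix n n ℂ | M.PosSemidef} = ⊤ := by
  open scoped MatrixOrder Matrix.Norms.L2Operator in
  simpa only [nonneg_iff_posSemidef] using CStarAlgebra.span_nonneg (A := Matrix n n ℂ)

lemma linearMap_ext_kronecker {R M l m n p : Type*} [CommSemiring R] [AddCommMonoid M] [Module R M]
    [Fintype l] [Fintype m] [Fintype n] [Fintype p]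
    [DecidableEq l] [DecidableEq m] [DecidableEq n] [DecidableEq p]
    {f g : Matrix (l × n) (m × p) R →ₗ[R] M} (h : ∀ X Y, f (X ⊗ₖ Y) = g (X ⊗ₖ Y)) : f = g := by
  refine Matrix.ext_linearMap (R := R) fun i j => LinearMap.ext_ring ?_
  simpa [single_kronecker_single] using h (single i.1 j.1 1) (single i.2 j.2 1)

namespace PosSemidef

variable {n 𝕜 : Type*} [Fintype n] [RCLike 𝕜] {Y : Matrix n n 𝕜}

lemma apply_eq_zero_right_of_diag_eq_zero (hY : Y.PosSemidef) {p : n} (h : Y p p = 0) (q : n) :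
    Y q p = 0 := by
  classical
  have := (hY.dotProduct_mulVec_zero_iff (Pi.single p 1)).mp (by simpa using h)
  simpa using congrFun this q

lemma apply_eq_zero_left_of_diag_eq_zero (hY : Y.PosSemidef) {p : n} (h : Y p p = 0) (q : n) :
    Y p q = 0 := by
  rw [← hY.1.apply, hY.apply_eq_zero_right_of_diag_eq_zero h, star_zero]

lemma apply_eq_apply_right (hY : Y.PosSemidef) {p q : n} (h : Y p p + Y q q - Y p q - Y q p = 0)
    (r : n) : Y r p = Y r q := by
  classical
  have := (hY.dotProduct_mulVec_zero_iff _).mp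
    ((star_single_sub_single_dotProduct_mulVec Y p q).trans h)
  simpa [mulVec_sub, sub_eq_zero] using congrFun this r

lemma apply_eq_apply_left (hY : Y.PosSemidef) {p q : n} (h : Y p p + Y q q - Y p q - Y q p = 0)
    (r : n) : Y p r = Y q r := by
  rw [← hY.1.apply, ← hY.1.apply q, hY.apply_eq_apply_right h]

end PosSemidef

end Matrix

lemma projAB_mul_mul_projAB [Fintype A] [Fintype B] [Fintype K] [DecidableEq A] [DecidableEq B]
    (σ : Matrix ((A × B) ⊕ K) ((A × B) ⊕ K) ℂ) :
    projAB * σ * projAB = embedAB σ.toBlocks₁₁ := by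
  conv_lhs => rw [← fromBlocks_toBlocks σ]
  simp [projAB, embedAB, fromBlocks_multiply]

@[simps]
def embedABLinearMap : Matrix (A × B) (A × B) ℂ →ₗ[ℂ] Matrix ((A × B) ⊕ K) ((A × B) ⊕ K) ℂ where
  toFun := embedAB
  map_add' M N := by simp [embedAB, fromBlocks_add]
  map_smul' c M := by simp [embedAB, fromBlocks_smul]

@[simps]
noncomputable def trALinearMap [Fintype A] :
    Matrix ((A × B) ⊕ K) ((A × B) ⊕ K) ℂ →ₗ[ℂ] Matrix B B ℂ where
  toFun := trA
  map_add' M N := by ext; simp [trA, Finset.sum_add_distrib]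
  map_smul' c M := by ext; simp [trA, Finset.mul_sum]

lemma trace_embedAB [Fintype A] [Fintype B] [Fintype K] (M : Matrix (A × B) (A × B) ℂ) :
    (embedAB (K := K) M).trace = M.trace := by
  simp [embedAB, trace, Fintype.sum_sum_type]

lemma trace_eq_trace_trA_add [Fintype A] [Fintype B] [Fintype K]
    (M : Matrix ((A × B) ⊕ K) ((A × B) ⊕ K) ℂ) :
    M.trace = (trA M).trace + ∑ y, M (Sum.inr y) (Sum.inr y) := by
  simp [trA, trace, Fintype.sum_sum_type, Fintype.sum_prod_type_right]

lemma trA_embedAB_kronecker [Fintype A] (σA : Matrix A A ℂ) (σB : Matrix B B ℂ) :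
    trA (K := K) (embedAB (σA ⊗ₖ σB)) = σA.trace • σB := by
  ext b b'
  simp [trA, embedAB, trace, Finset.sum_mul]

def IsNoiselessSubsystem
    (Φ : Matrix ((A × B) ⊕ K) ((A × B) ⊕ K) ℂ →ₗ[ℂ] Matrix ((A × B) ⊕ K) ((A × B) ⊕ K) ℂ) :
    Prop :=
  ∀ (σA : Matrix A A ℂ) (σB : Matrix B B ℂ), ∃ τA : Matrix A A ℂ,
    Φ (embedAB (σA ⊗ₖ σB)) = embedAB (τA ⊗ₖ σB)

section Noiseless

variable [Fintype A] [Fintype B] [Fintype K]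
  {Φ : Matrix ((A × B) ⊕ K) ((A × B) ⊕ K) ℂ →ₗ[ℂ] Matrix ((A × B) ⊕ K) ((A × B) ⊕ K) ℂ}

lemma trace_eq_of_map_embedAB_kronecker (hTP : ∀ ρ, (Φ ρ).trace = ρ.trace)
    {σA τA : Matrix A A ℂ} {σB : Matrix B B ℂ} (hσB : σB.trace ≠ 0)
    (h : Φ (embedAB (σA ⊗ₖ σB)) = embedAB (τA ⊗ₖ σB)) : τA.trace = σA.trace := by
  have := hTP (embedAB (σA ⊗ₖ σB))
  rw [h, trace_embedAB, trace_embedAB, trace_kronecker, trace_kronecker] at this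
  exact mul_right_cancel₀ hσB this

namespace IsNoiselessSubsystem

lemma trA_map_embedAB_kronecker (hN : IsNoiselessSubsystem Φ) (hTP : ∀ ρ, (Φ ρ).trace = ρ.trace)
    (σA : Matrix A A ℂ) (σB : Matrix B B ℂ) :
    trA (Φ (embedAB (σA ⊗ₖ σB))) = σA.trace • σB := by
  classical
  let L : Matrix B B ℂ →ₗ[ℂ] Matrix B B ℂ :=
    trALinearMap ∘ₗ Φ ∘ₗ embedABLinearMap ∘ₗ kroneckerBilinear (R := ℂ) σA - σA.trace • LinearMap.id
  have hL_apply (σB) : L σB = trA (Φ (embedAB (σA ⊗ₖ σB))) - σA.trace • σB := rfl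
  have hL : ∀ σB : Matrix B B ℂ, σB.trace ≠ 0 → L σB = 0 := by
    intro σB hσB
    obtain ⟨τA, hτA⟩ := hN σA σB
    rw [hL_apply, hτA, trA_embedAB_kronecker, trace_eq_of_map_embedAB_kronecker hTP hσB hτA,
      sub_self]
  rw [← sub_eq_zero, ← hL_apply]
  by_cases hσB : σB.trace = 0
  · rcases isEmpty_or_nonempty B with hB | hB
    · rw [Subsingleton.elim σB 0, map_zero]
    -- a traceless `σB` is the difference of `σB + 1` and `1`, both of nonzero trace
    have h1 : (1 : Matrix B B ℂ).trace ≠ 0 := by simp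
    rw [← add_sub_cancel_right σB 1, map_sub, hL _ (by simp [hσB]), hL 1 h1, sub_zero]
  · exact hL σB hσB

lemma trA_map_embedAB [DecidableEq A] [DecidableEq B] (hN : IsNoiselessSubsystem Φ)
    (hTP : ∀ ρ, (Φ ρ).trace = ρ.trace) (M : Matrix (A × B) (A × B) ℂ) :
    trA (Φ (embedAB M)) = trA (embedAB (K := K) M) := by
  have : trALinearMap ∘ₗ Φ ∘ₗ embedABLinearMap = trALinearMap ∘ₗ embedABLinearMap (K := K) :=
    linearMap_ext_kronecker fun σA σB => by
      simp [hN.trA_map_embedAB_kronecker hTP, trA_embedAB_kronecker]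
  exact LinearMap.congr_fun this M

end IsNoiselessSubsystem

end Noiseless

lemma IsCompletelyPositive.posSemidef_blocks {ι ι₁ ι₂ : Type*} [Fintype ι] [Fintype ι₁]
    [Fintype ι₂] {Φ : Matrix ι₁ ι₁ ℂ →ₗ[ℂ] Matrix ι₂ ι₂ ℂ} (hΦ : IsCompletelyPositive Φ)
    {M : Matrix (ι × ι₁) (ι × ι₁) ℂ} (hM : M.PosSemidef) :
    (Matrix.of fun p q : ι × ι₂ =>
      Φ (Matrix.of fun a b => M (p.1, a) (q.1, b)) p.2 q.2).PosSemidef := by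
  let e : ι × ι₁ ≃ Fin (Fintype.card ι) × ι₁ := (Fintype.equivFin ι).prodCongr (Equiv.refl ι₁)
  have h := hΦ _ _ ((posSemidef_submatrix_equiv e.symm).mpr hM)
  rw [← posSemidef_submatrix_equiv ((Fintype.equivFin ι).prodCongr (Equiv.refl ι₂))] at h
  convert h using 1
  ext p q
  simp [tensorExt, e]

lemma posSemidef_blocks_embedAB_kronecker_single [Fintype A] [Fintype B] [Fintype K]
    [DecidableEq B] {σA : Matrix A A ℂ} (hσA : σA.PosSemidef) :
    (Matrix.of fun p q : B × ((A × B) ⊕ K) =>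
      embedAB (σA ⊗ₖ single p.1 q.1 (1 : ℂ)) p.2 q.2).PosSemidef := by
  classical
  -- the blocks are `Pᴴ σA P` with `P a (b, z) = [z = (a, b)]`
  let P : Matrix A (B × ((A × B) ⊕ K)) ℂ :=
    Matrix.of fun a p => if p.2 = Sum.inl (a, p.1) then 1 else 0
  convert hσA.conjTranspose_mul_mul_same P using 1
  ext ⟨b, (⟨a, x⟩ | y)⟩ ⟨b', (⟨a', x'⟩ | y')⟩ <;>
    simp [P, embedAB, mul_apply, single_apply, ite_and, eq_comm, apply_ite (starRingEnd ℂ)]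
  split_ifs <;> rfl

section PosSemidefBlocks

variable [Fintype A] [DecidableEq B]
  {F : B → B → Matrix ((A × B) ⊕ K) ((A × B) ⊕ K) ℂ} {t : ℂ}

lemma sum_apply_inl_inl_of_trA_eq (hF_trA : ∀ b b', trA (F b b') = t • single b b' 1)
    (b b' x x' : B) : ∑ a, F b b' (.inl (a, x)) (.inl (a, x')) = t * single b b' 1 x x' := by
  simpa [trA] using congrFun (congrFun (hF_trA b b') x) x'

variable [Fintype B] [Fintype K]

lemma apply_self_eq_zero_of_trA_eq
    (hF : (Matrix.of fun p q : B × ((A × B) ⊕ K) => F p.1 q.1 p.2 q.2).PosSemidef)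
    (hF_trA : ∀ b b', trA (F b b') = t • single b b' 1) (hF_trace : ∀ b, (F b b).trace = t)
    (b : B) (z : (A × B) ⊕ K) (hz : ∀ a, z ≠ .inl (a, b)) : F b b z z = 0 := by
  rcases z with ⟨a, x⟩ | y
  · have hx : x ≠ b := fun h => hz a (h ▸ rfl)
    have hsum := sum_apply_inl_inl_of_trA_eq hF_trA b b x x
    rw [single_apply_of_row_ne hx.symm, mul_zero] at hsum
    exact (Finset.sum_eq_zero_iff_of_nonneg fun a _ => hF.diag_nonneg (i := (b, .inl (a, x)))).mp
      hsum a (Finset.mem_univ a)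
  · have hsum : ∑ y, F b b (.inr y) (.inr y) = 0 := by
      have := trace_eq_trace_trA_add (F b b)
      rw [hF_trace, hF_trA, trace_smul, trace_single_eq_same, smul_eq_mul, mul_one] at this
      linear_combination -this
    exact (Finset.sum_eq_zero_iff_of_nonneg fun y _ => hF.diag_nonneg (i := (b, .inr y))).mp
      hsum y (Finset.mem_univ y)

/-- This is the quadratic form of the block matrix at `e_(b,(a,b)) - e_(b',(a,b'))`: it is
nonnegative for each `a`, and its sum over `a` vanishes by the partial-trace condition. -/
lemma quadForm_inl_sub_inl_eq_zero_of_trA_eq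
    (hF : (Matrix.of fun p q : B × ((A × B) ⊕ K) => F p.1 q.1 p.2 q.2).PosSemidef)
    (hF_trA : ∀ b b', trA (F b b') = t • single b b' 1) (b b' : B) (a : A) :
    F b b (.inl (a, b)) (.inl (a, b)) + F b' b' (.inl (a, b')) (.inl (a, b'))
      - F b b' (.inl (a, b)) (.inl (a, b')) - F b' b (.inl (a, b')) (.inl (a, b)) = 0 := by
  classical
  have hsum : ∑ a, (F b b (.inl (a, b)) (.inl (a, b)) + F b' b' (.inl (a, b')) (.inl (a, b'))
      - F b b' (.inl (a, b)) (.inl (a, b')) - F b' b (.inl (a, b')) (.inl (a, b))) = 0 := by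
    simp only [Finset.sum_sub_distrib, Finset.sum_add_distrib,
      sum_apply_inl_inl_of_trA_eq hF_trA, single_apply_same]
    ring
  refine (Finset.sum_eq_zero_iff_of_nonneg fun a _ => ?_).mp hsum a (Finset.mem_univ a)
  have := (posSemidef_iff_dotProduct_mulVec.mp hF).2
    (Pi.single (b, .inl (a, b)) 1 - Pi.single (b', .inl (a, b')) 1)
  rwa [star_single_sub_single_dotProduct_mulVec] at this

lemma exists_eq_embedAB_kronecker_single
    (hF : (Matrix.of fun p q : B × ((A × B) ⊕ K) => F p.1 q.1 p.2 q.2).PosSemidef)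
    (hF_trA : ∀ b b', trA (F b b') = t • single b b' 1) (hF_trace : ∀ b, (F b b).trace = t) :
    ∃ τA : Matrix A A ℂ, ∀ b b', F b b' = embedAB (τA ⊗ₖ single b b' 1) := by
  rcases isEmpty_or_nonempty B with hB | ⟨⟨b₀⟩⟩
  · exact ⟨0, isEmptyElim⟩
  have hdiag := apply_self_eq_zero_of_trA_eq hF hF_trA hF_trace
  have hquad := quadForm_inl_sub_inl_eq_zero_of_trA_eq hF hF_trA
  refine ⟨Matrix.of fun a a' => F b₀ b₀ (.inl (a, b₀)) (.inl (a', b₀)), fun b b' => ?_⟩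
  ext z z'
  by_cases hz : ∃ a, z = .inl (a, b)
  · by_cases hz' : ∃ a', z' = .inl (a', b')
    · obtain ⟨a, rfl⟩ := hz
      obtain ⟨a', rfl⟩ := hz'
      calc F b b' (.inl (a, b)) (.inl (a', b'))
          = F b₀ b' (.inl (a, b₀)) (.inl (a', b')) :=
            hF.apply_eq_apply_left (p := (b, _)) (q := (b₀, _)) (hquad b b₀ a) (b', _)
        _ = F b₀ b₀ (.inl (a, b₀)) (.inl (a', b₀)) :=
            hF.apply_eq_apply_right (p := (b', _)) (q := (b₀, _)) (hquad b' b₀ a') (b₀, _)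
        _ = _ := by simp [embedAB]
    · push Not at hz'
      have h0 : F b b' z z' = 0 :=
        hF.apply_eq_zero_right_of_diag_eq_zero (p := (b', z')) (hdiag b' z' hz') (b, z)
      rw [h0]
      rcases z' with ⟨a', x'⟩ | y'
      · have hx' : b' ≠ x' := fun h => hz' a' (h ▸ rfl)
        rcases z with ⟨a, x⟩ | y <;> simp [embedAB, hx']
      · rcases z with ⟨a, x⟩ | y <;> simp [embedAB]
  · push Not at hz
    have h0 : F b b' z z' = 0 :=
      hF.apply_eq_zero_left_of_diag_eq_zero (p := (b, z)) (hdiag b z hz) (b', z')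
    rw [h0]
    rcases z with ⟨a, x⟩ | y
    · have hx : b ≠ x := fun h => hz a (h ▸ rfl)
      rcases z' with ⟨a', x'⟩ | y' <;> simp [embedAB, hx]
    · rcases z' with ⟨a', x'⟩ | y' <;> simp [embedAB]

end PosSemidefBlocks

lemma IsNoiselessSubsystem.of_trA_map_embedAB [Fintype A] [Fintype B] [Fintype K]
    [DecidableEq B]
    {Φ : Matrix ((A × B) ⊕ K) ((A × B) ⊕ K) ℂ →ₗ[ℂ] Matrix ((A × B) ⊕ K) ((A × B) ⊕ K) ℂ}
    (hCP : IsCompletelyPositive Φ) (hTP : ∀ ρ, (Φ ρ).trace = ρ.trace)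
    (hPT : ∀ M : Matrix (A × B) (A × B) ℂ, trA (Φ (embedAB M)) = trA (embedAB (K := K) M)) :
    IsNoiselessSubsystem Φ := by
  classical
  let kron : Matrix A A ℂ →ₗ[ℂ] Matrix B B ℂ →ₗ[ℂ] Matrix (A × B) (A × B) ℂ :=
    kroneckerBilinear
  -- the `σA` admitting a `τA` with `Φ (σA ⊗ σB) = τA ⊗ σB` for all `σB` form a submodule
  let S : Submodule ℂ (Matrix A A ℂ) :=
    (LinearMap.range (kron.compr₂ embedABLinearMap)).comap (kron.compr₂ (Φ ∘ₗ embedABLinearMap))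
  have hS : ∀ σA : Matrix A A ℂ, σA.PosSemidef → σA ∈ S := by
    intro σA hσA
    obtain ⟨τA, hτA⟩ := exists_eq_embedAB_kronecker_single (t := σA.trace)
      (F := fun b b' => Φ (embedAB (σA ⊗ₖ single b b' 1)))
      (hCP.posSemidef_blocks (posSemidef_blocks_embedAB_kronecker_single hσA))
      (fun b b' => by rw [hPT, trA_embedAB_kronecker, smul_single, smul_eq_mul, mul_one])
      (fun b => by rw [hTP, trace_embedAB, trace_kronecker, trace_single_eq_same, mul_one])
    exact ⟨τA, Matrix.ext_linearMap (R := ℂ) fun b b' => LinearMap.ext_ring (hτA b b').symm⟩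
  have hS_top : S = ⊤ := by
    rw [eq_top_iff, ← span_posSemidef_eq_top, Submodule.span_le]
    exact hS
  intro σA σB
  obtain ⟨τA, hτA⟩ := (hS_top ▸ Submodule.mem_top : σA ∈ S)
  exact ⟨τA, (LinearMap.congr_fun hτA σB).symm⟩

theorem noiseless_iff_partialTrace_general
    [Fintype A] [Fintype B] [Fintype K] [DecidableEq A] [DecidableEq B]
    (Φ : Matrix ((A × B) ⊕ K) ((A × B) ⊕ K) ℂ →ₗ[ℂ] Matrix ((A × B) ⊕ K) ((A × B) ⊕ K) ℂ)
    (hCP : IsCompletelyPositive Φ)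
    (hTP : ∀ ρ, (Φ ρ).trace = ρ.trace) :
    (∀ (σA : Matrix A A ℂ) (σB : Matrix B B ℂ), ∃ τA : Matrix A A ℂ,
        Φ (embedAB (σA ⊗ₖ σB)) = embedAB (τA ⊗ₖ σB)) ↔
      (∀ σ : Matrix ((A × B) ⊕ K) ((A × B) ⊕ K) ℂ,
        trA (Φ (projAB * σ * projAB)) = trA (projAB * σ * projAB)) := by
  simp only [projAB_mul_mul_projAB]
  exact ⟨fun hN σ => IsNoiselessSubsystem.trA_map_embedAB hN hTP σ.toBlocks₁₁,
    fun hPT => IsNoiselessSubsystem.of_trA_map_embedAB hCP hTP fun M => hPT (embedAB M)⟩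

/-- **Partial-trace characterization of noiseless subsystems.**  For a quantum channel
`Φ` on `B(H)`, `H = (H^A ⊗ H^B) ⊕ K`, the subsystem `B` is noiseless for `Φ` iff
`Tr_A ∘ Φ ∘ 𝒫^{AB} = Tr_A ∘ 𝒫^{AB}`. -/
theorem noiseless_iff_partialTrace
    [Fintype A] [Fintype B] [Fintype K] [DecidableEq A] [DecidableEq B] [DecidableEq K]
    (Φ : Matrix ((A × B) ⊕ K) ((A × B) ⊕ K) ℂ →ₗ[ℂ] Matrix ((A × B) ⊕ K) ((A × B) ⊕ K) ℂ)
    (hCP : IsCompletelyPositive Φ)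
    (hTP : ∀ ρ, (Φ ρ).trace = ρ.trace) :
    (∀ (σA : Matrix A A ℂ) (σB : Matrix B B ℂ), ∃ τA : Matrix A A ℂ,
        Φ (embedAB (σA ⊗ₖ σB)) = embedAB (τA ⊗ₖ σB)) ↔
      (∀ σ : Matrix ((A × B) ⊕ K) ((A × B) ⊕ K) ℂ,
        trA (Φ (projAB * σ * projAB)) = trA (projAB * σ * projAB)) :=
  noiseless_iff_partialTrace_general Φ hCP hTP
end

section
/- (Theorem on group-invariant subsystems, equivalence of conditions 1 and 4.) Let G be a group with a unitary representation π : G → U(H^B) on the finite-dimensional Hilbert space H^B = ℂ^B, let H = (H^A ⊗ H^B) ⊕ K with H^A = ℂ^A, and let Φ be a quantum channel on B(H) given in operator-sum form Φ(ρ) = Σ_a E_a ρ E_a†. Let {|α_k⟩} be an orthonormal basis for H^A and let P_{kl} = |α_k⟩⟨α_l| ⊗ 1^B be the corresponding matrix units, regarded as operators on H that are zero on K. Then B is group invariant under Φ — i.e. there exists U ∈ π(G) such that for all operators σ^A on H^A and σ^B on H^B there is an operator τ^A on H^A with Φ(σ^A ⊗ σ^B) = τ^A ⊗ U σ^B U†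 — if and only if there exists U ∈ π(G) and a set of complex scalars {λ_{akl}} such that P_{kk} (1^A ⊗ U†) E_a P_{ll} = λ_{akl} P_{kl} for all a, k, l, and (1^A ⊗ U†) E_a P^{AB} = P^{AB} (1^A ⊗ U†) E_a P^{AB} for all a. -/
open Matrix
open scoped ComplexOrder Kronecker

variable {A B K : Type*}

/-- For a unitary `U` on `H^B`, the operator on `H = (H^A ⊗ H^B) ⊕ K` acting as the
Kronecker product `1^A ⊗ U` on the summand `H^A ⊗ H^B` and as the identity on `K`. -/
def oneTensor [Fintype A] [DecidableEq A] [DecidableEq B] [DecidableEq K]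
    (U : Matrix B B ℂ) : Matrix ((A × B) ⊕ K) ((A × B) ⊕ K) ℂ :=
  Matrix.fromBlocks ((1 : Matrix A A ℂ) ⊗ₖ U) 0 0 (1 : Matrix K K ℂ)

/-!
Let `U = π g`. Both conditions are equivalent to: every Kraus operator `E_a` maps `H^A ⊗ H^B`
into itself and acts there as `M_a ⊗ U` for some operator `M_a` on `H^A`. Condition 4 says this
in the coordinates `(1^A ⊗ U†) E_a`, which then act as `M_a ⊗ 1^B`, expressed through the matrix
units `P_{kl}` with `λ_{akl} = ⟨α_k| M_a |α_l⟩`. If `E_a P^{AB} = M_a ⊗ U`, then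
`Φ(σ^A ⊗ σ^B) = (Σ_a M_a σ^A M_a†) ⊗ U σ^B U†`. Conversely,
`Φ(|i⟩⟨i| ⊗ |ψ⟩⟨ψ|) = Σ_a |E_a (i ⊗ ψ)⟩⟨E_a (i ⊗ ψ)|` has the form `τ ⊗ |Uψ⟩⟨Uψ|`, so each
`E_a (i ⊗ ψ)` is orthogonal to the kernel of `τ ⊗ |Uψ⟩⟨Uψ|`. Hence `E_a` has no component from
`H^A ⊗ H^B` into `K`, and each block `⟨j| E_a |i⟩` maps every `ψ` to a multiple of `Uψ`, which
forces it to be a scalar multiple of `U`.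
-/

namespace Matrix

section Orthogonality

variable {ι n : Type*} [Fintype ι] [Fintype n]

theorem star_dotProduct_eq_zero_of_sum_vecMulVec_mulVec_eq_zero {𝕜 : Type*} [RCLike 𝕜]
    (w : ι → n → 𝕜) {y : n → 𝕜} (hy : (∑ a, vecMulVec (w a) (star (w a))) *ᵥ y = 0) (a : ι) :
    star y ⬝ᵥ w a = 0 := by
  have hsum : ∑ a, star (star y ⬝ᵥ w a) * (star y ⬝ᵥ w a) = 0 := by
    rw [← dotProduct_zero (star y), ← hy]
    simp only [sum_mulVec, dotProduct_sum, vecMulVec_mulVec, op_smul_eq_smul, dotProduct_smul,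
      smul_eq_mul, ← star_dotProduct]
  simpa using (Finset.sum_eq_zero_iff_of_nonneg fun a _ => star_mul_self_nonneg _).1 hsum a
    (Finset.mem_univ a)

variable {R : Type*} [CommRing R] [StarRing R] [DecidableEq n]

theorem exists_eq_smul_one_of_forall_orthogonal {C : Matrix n n R}
    (h : ∀ ψ φ : n → R, star φ ⬝ᵥ ψ = 0 → star φ ⬝ᵥ C *ᵥ ψ = 0) : ∃ c : R, C = c • 1 := by
  have offDiag : ∀ b b', b ≠ b' → C b' b = 0 := fun b b' hbb' => by
    simpa [hbb'] using h (Pi.single b 1) (Pi.single b' 1)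
  have diag : ∀ b b', C b b = C b' b' := fun b b' => by
    rcases eq_or_ne b b' with rfl | hbb'
    · rfl
    have := h (Pi.single b 1 + Pi.single b' 1) (Pi.single b 1 - Pi.single b' 1)
    simp [mulVec_add, hbb', hbb'.symm, offDiag b b' hbb', offDiag b' b hbb'.symm] at this
    linear_combination this
  rcases isEmpty_or_nonempty n with _ | ⟨⟨b₀⟩⟩
  · exact ⟨0, Subsingleton.elim _ _⟩
  refine ⟨C b₀ b₀, ext fun b' b => ?_⟩
  rcases eq_or_ne b b' with rfl | hbb'
  · simp [diag b b₀]
  · simp [offDiag b b' hbb', hbb'.symm]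

theorem exists_eq_smul_of_forall_orthogonal {C U : Matrix n n R} (hU : U ∈ unitaryGroup n R)
    (h : ∀ ψ φ : n → R, star φ ⬝ᵥ U *ᵥ ψ = 0 → star φ ⬝ᵥ C *ᵥ ψ = 0) : ∃ c : R, C = c • U := by
  obtain ⟨c, hc⟩ := exists_eq_smul_one_of_forall_orthogonal (C := C * star U) fun ψ φ hψφ => by
    rw [← mulVec_mulVec]
    refine h _ φ ?_
    rwa [mulVec_mulVec, mem_unitaryGroup_iff.1 hU, one_mulVec]
  refine ⟨c, ?_⟩
  rw [← mul_one C, ← mem_unitaryGroup_iff'.1 hU, ← mul_assoc, hc, smul_mul_assoc, one_mul]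

theorem sum_vecMulVec_star_eq_one_of_orthonormal {v : n → n → R}
    (hv : ∀ k l, ∑ i, star (v k i) * v l i = if k = l then 1 else 0) :
    ∑ k, vecMulVec (v k) (star (v k)) = 1 := by
  have hV : (of v)ᵀᴴ * (of v)ᵀ = 1 := by
    ext k l
    simpa [mul_apply, one_apply] using hv k l
  have hV' : (of v)ᵀ * (of v)ᵀᴴ = 1 := mul_eq_one_comm.1 hV
  ext i j
  simpa [mul_apply, vecMulVec_apply, sum_apply] using congr_fun₂ hV' i j

end Orthogonality

section KroneckerVec

variable {α m n : Type*}

def kroneckerVec [Mul α] (x : m → α) (y : n → α) : m × n → α := fun p => x p.1 * y p.2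

@[simp]
theorem kroneckerVec_apply [Mul α] (x : m → α) (y : n → α) (p : m × n) :
    kroneckerVec x y p = x p.1 * y p.2 := rfl

@[simp]
theorem kroneckerVec_zero_right [MulZeroClass α] (x : m → α) :
    kroneckerVec x (0 : n → α) = 0 := by
  ext p; simp

theorem star_kroneckerVec [CommSemiring α] [StarRing α] (x : m → α) (y : n → α) :
    star (kroneckerVec x y) = kroneckerVec (star x) (star y) := by
  ext p; simp

theorem kroneckerVec_single_single [MulZeroOneClass α] [DecidableEq m] [DecidableEq n]
    (i : m) (j : n) : kroneckerVec (Pi.single i (1 : α)) (Pi.single j 1) = Pi.single (i, j) 1 := by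
  ext ⟨i', j'⟩
  simp only [kroneckerVec_apply, Pi.single_apply, Prod.mk.injEq, ite_and, ite_mul, one_mul,
    zero_mul]

theorem vecMulVec_kronecker_vecMulVec [CommSemiring α] {m' n' : Type*} (x : m → α) (y : n → α)
    (z : m' → α) (w : n' → α) :
    vecMulVec x y ⊗ₖ vecMulVec z w = vecMulVec (kroneckerVec x z) (kroneckerVec y w) := by
  ext p q
  simp only [kroneckerMap_apply, vecMulVec_apply, kroneckerVec_apply]
  ring

theorem kronecker_mulVec_kroneckerVec [CommSemiring α] [Fintype m] [Fintype n] {m' n' : Type*}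
    (M : Matrix m' m α) (N : Matrix n' n α) (x : m → α) (y : n → α) :
    (M ⊗ₖ N) *ᵥ kroneckerVec x y = kroneckerVec (M *ᵥ x) (N *ᵥ y) := by
  ext p
  simp only [mulVec, dotProduct, kroneckerMap_apply, kroneckerVec_apply, Fintype.sum_prod_type,
    Finset.sum_mul_sum]
  exact Finset.sum_congr rfl fun _ _ => Finset.sum_congr rfl fun _ _ => by ring

theorem kroneckerVec_single_dotProduct_mulVec [CommSemiring α] [Fintype m] [Fintype n]
    [DecidableEq m] (N : Matrix (m × n) (m × n) α) (i j : m) (x y : n → α) :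
    kroneckerVec (Pi.single j 1) y ⬝ᵥ N *ᵥ kroneckerVec (Pi.single i 1) x =
      y ⬝ᵥ (comp m m n n α).symm N j i *ᵥ x := by
  simp [dotProduct, mulVec, Fintype.sum_prod_type, Pi.single_apply, Finset.mul_sum]

end KroneckerVec

theorem mul_vecMulVec_star_mul_conjTranspose {α m n : Type*} [Fintype n] [CommSemiring α]
    [StarRing α] (M : Matrix m n α) (x : n → α) :
    M * vecMulVec x (star x) * Mᴴ = vecMulVec (M *ᵥ x) (star (M *ᵥ x)) := by
  rw [mul_vecMulVec, vecMulVec_mul, star_mulVec]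

theorem sum_kronecker {ι α l m n p : Type*} [NonUnitalNonAssocSemiring α] (s : Finset ι)
    (f : ι → Matrix l m α) (N : Matrix n p α) : (∑ i ∈ s, f i) ⊗ₖ N = ∑ i ∈ s, f i ⊗ₖ N :=
  map_sum (⟨⟨(· ⊗ₖ N), zero_kronecker N⟩, fun _ _ => add_kronecker _ _ _⟩ : Matrix l m α →+ _) f s

end Matrix

section Embedding

theorem embedAB_add (M N : Matrix (A × B) (A × B) ℂ) :
    embedAB (K := K) (M + N) = embedAB M + embedAB N := by
  simp [embedAB, fromBlocks_add]

theorem embedAB_sum {ι : Type*} (s : Finset ι) (f : ι → Matrix (A × B) (A × B) ℂ) :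
    embedAB (K := K) (∑ i ∈ s, f i) = ∑ i ∈ s, embedAB (f i) :=
  map_sum (AddMonoidHom.mk' embedAB embedAB_add) f s

theorem embedAB_smul (c : ℂ) (M : Matrix (A × B) (A × B) ℂ) :
    embedAB (K := K) (c • M) = c • embedAB M := by
  simp [embedAB, fromBlocks_smul]

theorem embedAB_conjTranspose (M : Matrix (A × B) (A × B) ℂ) :
    (embedAB (K := K) M)ᴴ = embedAB Mᴴ := by
  simp [embedAB, fromBlocks_conjTranspose]

theorem embedAB_vecMulVec (u w : A × B → ℂ) :
    embedAB (K := K) (vecMulVec u w) = vecMulVec (Sum.elim u 0) (Sum.elim w 0) := by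
  ext (p | κ) (q | κ') <;> simp [embedAB, vecMulVec_apply]

theorem embedAB_vecMulVec_star_kronecker (x : A → ℂ) (ψ : B → ℂ) :
    embedAB (K := K) (vecMulVec x (star x) ⊗ₖ vecMulVec ψ (star ψ)) =
      vecMulVec (Sum.elim (kroneckerVec x ψ) 0) (star (Sum.elim (kroneckerVec x ψ) 0)) := by
  rw [vecMulVec_kronecker_vecMulVec, embedAB_vecMulVec, Function.star_sumElim, star_kroneckerVec,
    star_zero]

theorem projAB_conjTranspose [DecidableEq A] [DecidableEq B] :
    (projAB : Matrix ((A × B) ⊕ K) ((A × B) ⊕ K) ℂ)ᴴ = projAB := by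
  simp [projAB, fromBlocks_conjTranspose]

theorem oneTensor_one [Fintype A] [DecidableEq A] [DecidableEq B] [DecidableEq K] :
    oneTensor (A := A) (B := B) (K := K) 1 = 1 := by
  simp [oneTensor, ← fromBlocks_one]

variable [Fintype A] [Fintype B] [Fintype K]

theorem embedAB_mul (M N : Matrix (A × B) (A × B) ℂ) :
    embedAB (K := K) M * embedAB N = embedAB (M * N) := by
  simp [embedAB, fromBlocks_multiply]

theorem embedAB_mulVec_sumElim (M : Matrix (A × B) (A × B) ℂ) (u : A × B → ℂ) (y : K → ℂ) :
    embedAB M *ᵥ Sum.elim u y = Sum.elim (M *ᵥ u) 0 := by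
  simp [embedAB, fromBlocks_mulVec]

theorem sumElim_dotProduct_mulVec_sumElim_zero (E : Matrix ((A × B) ⊕ K) ((A × B) ⊕ K) ℂ)
    (u r : A × B → ℂ) (y : K → ℂ) :
    Sum.elim u y ⬝ᵥ E *ᵥ Sum.elim r 0 = u ⬝ᵥ E.toBlocks₁₁ *ᵥ r + y ⬝ᵥ E.toBlocks₂₁ *ᵥ r := by
  rw [← fromBlocks_toBlocks E, fromBlocks_mulVec]
  simp [sumElim_dotProduct_sumElim]

variable [DecidableEq A] [DecidableEq B]

theorem projAB_mul_embedAB (M : Matrix (A × B) (A × B) ℂ) :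
    projAB * embedAB (K := K) M = embedAB M := by
  rw [projAB, ← embedAB, embedAB_mul, one_mul]

theorem embedAB_mul_projAB (M : Matrix (A × B) (A × B) ℂ) :
    embedAB (K := K) M * projAB = embedAB M := by
  rw [projAB, ← embedAB, embedAB_mul, mul_one]

theorem mul_projAB (E : Matrix ((A × B) ⊕ K) ((A × B) ⊕ K) ℂ) :
    E * projAB = fromBlocks E.toBlocks₁₁ 0 E.toBlocks₂₁ 0 := by
  conv_lhs => rw [← fromBlocks_toBlocks E]
  simp [projAB, fromBlocks_multiply]

variable [DecidableEq K]

theorem oneTensor_mul_embedAB (U : Matrix B B ℂ) (M : Matrix (A × B) (A × B) ℂ) :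
    oneTensor U * embedAB (K := K) M = embedAB ((1 ⊗ₖ U) * M) := by
  simp [oneTensor, embedAB, fromBlocks_multiply]

theorem oneTensor_mul_oneTensor (U V : Matrix B B ℂ) :
    oneTensor (A := A) (K := K) U * oneTensor V = oneTensor (U * V) := by
  simp [oneTensor, fromBlocks_multiply, ← mul_kronecker_mul]

end Embedding

section Invariance

variable [Fintype A] [Fintype B] [Fintype K] [DecidableEq A] [DecidableEq B]

theorem mul_projAB_eq_embedAB_kronecker_of_toBlocks {E : Matrix ((A × B) ⊕ K) ((A × B) ⊕ K) ℂ}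
    {M : Matrix A A ℂ} {U : Matrix B B ℂ} (h₂₁ : E.toBlocks₂₁ = 0)
    (h₁₁ : ∀ j i, (comp A A B B ℂ).symm E.toBlocks₁₁ j i = M j i • U) :
    E * projAB = embedAB (M ⊗ₖ U) := by
  rw [mul_projAB, h₂₁, embedAB]
  congr
  ext ⟨j, b'⟩ ⟨i, b⟩
  simpa using congr_fun₂ (h₁₁ j i) b' b

theorem exists_mul_projAB_eq_embedAB_kronecker_one_iff
    {F : Matrix ((A × B) ⊕ K) ((A × B) ⊕ K) ℂ} {v : A → A → ℂ}
    (hv : ∑ k, vecMulVec (v k) (star (v k)) = 1) {P : A → A → Matrix ((A × B) ⊕ K) ((A × B) ⊕ K) ℂ}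
    (hP : ∀ k l, P k l = embedAB (vecMulVec (v k) (star (v l)) ⊗ₖ (1 : Matrix B B ℂ))) :
    (∃ M : Matrix A A ℂ, F * projAB = embedAB (M ⊗ₖ 1)) ↔
      ∃ lam : A → A → ℂ,
        (∀ k l, P k k * F * P l l = lam k l • P k l) ∧ F * projAB = projAB * (F * projAB) := by
  constructor
  · rintro ⟨M, hM⟩
    refine ⟨fun k l => star (v k) ⬝ᵥ M *ᵥ v l, fun k l => ?_, by rw [hM, projAB_mul_embedAB]⟩
    calc P k k * F * P l l = P k k * (F * projAB) * P l l := by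
          rw [mul_assoc (P k k), mul_assoc (P k k), mul_assoc F, hP l l, projAB_mul_embedAB]
      _ = _ := by
          rw [hM, hP, hP, hP, embedAB_mul, embedAB_mul, ← mul_kronecker_mul, ← mul_kronecker_mul,
            one_mul, one_mul, vecMulVec_mul, vecMulVec_mul_vecMulVec, ← dotProduct_mulVec,
            vecMulVec_smul, smul_kronecker, embedAB_smul]
  · rintro ⟨lam, hlam, hproj⟩
    have hsum : projAB = ∑ k, P k k := by
      simp only [hP]
      rw [← embedAB_sum, ← sum_kronecker, hv, one_kronecker_one]
      rfl
    refine ⟨∑ k, ∑ l, lam k l • vecMulVec (v k) (star (v l)), ?_⟩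
    calc F * projAB = projAB * F * projAB := by rw [hproj, mul_assoc]
      _ = ∑ k, ∑ l, lam k l • P k l := by
          simp only [hsum, Finset.sum_mul, Finset.mul_sum, hlam]
          exact Finset.sum_comm
      _ = _ := by simp only [hP, sum_kronecker, smul_kronecker, embedAB_sum, embedAB_smul]

theorem mul_projAB_eq_embedAB_kronecker_iff_oneTensor [DecidableEq K]
    {E : Matrix ((A × B) ⊕ K) ((A × B) ⊕ K) ℂ} {M : Matrix A A ℂ} {U : Matrix B B ℂ}
    (hU : U ∈ unitaryGroup B ℂ) :
    E * projAB = embedAB (M ⊗ₖ U) ↔ oneTensor Uᴴ * E * projAB = embedAB (M ⊗ₖ 1) := by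
  rw [← star_eq_conjTranspose]
  constructor
  · intro h
    rw [mul_assoc, h, oneTensor_mul_embedAB, ← mul_kronecker_mul, one_mul,
      mem_unitaryGroup_iff'.1 hU]
  · intro h
    calc E * projAB = oneTensor U * (oneTensor (star U) * E * projAB) := by
          rw [← mul_assoc, ← mul_assoc, oneTensor_mul_oneTensor, mem_unitaryGroup_iff.1 hU,
            oneTensor_one, one_mul]
      _ = embedAB (M ⊗ₖ U) := by
          rw [h, oneTensor_mul_embedAB, ← mul_kronecker_mul, one_mul, mul_one]

variable {ι : Type*} [Fintype ι]

theorem sum_mul_embedAB_kronecker_mul_conjTranspose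
    {E : ι → Matrix ((A × B) ⊕ K) ((A × B) ⊕ K) ℂ} {M : ι → Matrix A A ℂ} {U : Matrix B B ℂ}
    (hE : ∀ a, E a * projAB = embedAB (M a ⊗ₖ U)) (σA : Matrix A A ℂ) (σB : Matrix B B ℂ) :
    ∑ a, E a * embedAB (σA ⊗ₖ σB) * (E a)ᴴ =
      embedAB ((∑ a, M a * σA * (M a)ᴴ) ⊗ₖ (U * σB * Uᴴ)) := by
  rw [sum_kronecker, embedAB_sum]
  refine Finset.sum_congr rfl fun a _ => ?_
  calc E a * embedAB (σA ⊗ₖ σB) * (E a)ᴴ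
      = (E a * projAB) * embedAB (σA ⊗ₖ σB) * (E a * projAB)ᴴ := by
        conv_lhs => rw [← projAB_mul_embedAB, ← embedAB_mul_projAB]
        simp only [conjTranspose_mul, projAB_conjTranspose, mul_assoc]
    _ = embedAB ((M a * σA * (M a)ᴴ) ⊗ₖ (U * σB * Uᴴ)) := by
        rw [hE, embedAB_conjTranspose, embedAB_mul, embedAB_mul, conjTranspose_kronecker,
          mul_kronecker_mul, mul_kronecker_mul]

theorem exists_mul_projAB_eq_embedAB_kronecker {E : ι → Matrix ((A × B) ⊕ K) ((A × B) ⊕ K) ℂ}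
    {U : Matrix B B ℂ} (hU : U ∈ unitaryGroup B ℂ)
    (h : ∀ (σA : Matrix A A ℂ) (σB : Matrix B B ℂ), ∃ τA : Matrix A A ℂ,
      ∑ a, E a * embedAB (σA ⊗ₖ σB) * (E a)ᴴ = embedAB (τA ⊗ₖ (U * σB * Uᴴ))) (a : ι) :
    ∃ M : Matrix A A ℂ, E a * projAB = embedAB (M ⊗ₖ U) := by
  have hker : ∀ (i : A) (ψ : B → ℂ) (z : (A × B) ⊕ K → ℂ),
      (∀ τ : Matrix A A ℂ, embedAB (τ ⊗ₖ vecMulVec (U *ᵥ ψ) (star (U *ᵥ ψ))) *ᵥ z = 0) →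
      star z ⬝ᵥ E a *ᵥ Sum.elim (kroneckerVec (Pi.single i 1) ψ) 0 = 0 := by
    intro i ψ z hz
    obtain ⟨τ, hτ⟩ := h (vecMulVec (Pi.single i 1) (star (Pi.single i 1))) (vecMulVec ψ (star ψ))
    simp only [embedAB_vecMulVec_star_kronecker, mul_vecMulVec_star_mul_conjTranspose] at hτ
    exact star_dotProduct_eq_zero_of_sum_vecMulVec_mulVec_eq_zero _ (hτ ▸ hz τ) a
  have h₂₁ : (E a).toBlocks₂₁ = 0 := by
    classical
    ext κ ⟨i, b⟩
    have := hker i (Pi.single b 1) (Sum.elim 0 (Pi.single κ 1)) fun τ => by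
      rw [embedAB_mulVec_sumElim, mulVec_zero, Sum.elim_zero_zero]
    simpa [toBlocks₂₁, Function.star_sumElim, sumElim_dotProduct_mulVec_sumElim_zero,
      kroneckerVec_single_single, mulVec_single_one] using this
  have h₁₁ : ∀ j i, ∃ c : ℂ, (comp A A B B ℂ).symm (E a).toBlocks₁₁ j i = c • U := fun j i =>
    exists_eq_smul_of_forall_orthogonal hU fun ψ φ hφ => by
      have := hker i ψ (Sum.elim (kroneckerVec (Pi.single j 1) φ) 0) fun τ => by
        rw [embedAB_mulVec_sumElim, kronecker_mulVec_kroneckerVec, vecMulVec_mulVec,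
          star_dotProduct, hφ, star_zero, MulOpposite.op_zero, zero_smul, kroneckerVec_zero_right,
          Sum.elim_zero_zero]
      simpa [Function.star_sumElim, sumElim_dotProduct_mulVec_sumElim_zero, star_kroneckerVec,
        kroneckerVec_single_dotProduct_mulVec] using this
  choose M hM using h₁₁
  exact ⟨of M, mul_projAB_eq_embedAB_kronecker_of_toBlocks h₂₁ hM⟩

theorem forall_exists_sum_eq_embedAB_kronecker_iff
    {E : ι → Matrix ((A × B) ⊕ K) ((A × B) ⊕ K) ℂ} {U : Matrix B B ℂ}
    (hU : U ∈ unitaryGroup B ℂ) :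
    (∀ (σA : Matrix A A ℂ) (σB : Matrix B B ℂ), ∃ τA : Matrix A A ℂ,
      ∑ a, E a * embedAB (σA ⊗ₖ σB) * (E a)ᴴ = embedAB (τA ⊗ₖ (U * σB * Uᴴ))) ↔
    ∀ a, ∃ M : Matrix A A ℂ, E a * projAB = embedAB (M ⊗ₖ U) := by
  refine ⟨fun h => exists_mul_projAB_eq_embedAB_kronecker hU h, fun h σA σB => ?_⟩
  choose M hM using h
  exact ⟨_, sum_mul_embedAB_kronecker_mul_conjTranspose hM σA σB⟩

end Invariance

theorem groupInvariant_iff_cond4_general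
    {G : Type*} [Group G] {N : ℕ}
    [Fintype A] [Fintype B] [Fintype K] [DecidableEq A] [DecidableEq B] [DecidableEq K]
    (π : G →* Matrix.unitaryGroup B ℂ)
    (Φ : Matrix ((A × B) ⊕ K) ((A × B) ⊕ K) ℂ →ₗ[ℂ] Matrix ((A × B) ⊕ K) ((A × B) ⊕ K) ℂ)
    (E : Fin N → Matrix ((A × B) ⊕ K) ((A × B) ⊕ K) ℂ)
    (hE : ∀ ρ, Φ ρ = ∑ a, E a * ρ * (E a)ᴴ)
    (v : A → (A → ℂ))
    (hv : ∀ k l : A, ∑ i : A, star (v k i) * v l i = if k = l then 1 else 0)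
    (P : A → A → Matrix ((A × B) ⊕ K) ((A × B) ⊕ K) ℂ)
    (hP : ∀ k l : A,
      P k l = embedAB (Matrix.vecMulVec (v k) (star (v l)) ⊗ₖ (1 : Matrix B B ℂ))) :
    (∃ g : G, ∀ (σA : Matrix A A ℂ) (σB : Matrix B B ℂ), ∃ τA : Matrix A A ℂ,
        Φ (embedAB (σA ⊗ₖ σB)) =
          embedAB (τA ⊗ₖ ((π g : Matrix B B ℂ) * σB * (π g : Matrix B B ℂ)ᴴ))) ↔
      (∃ g : G, ∃ lam : Fin N → A → A → ℂ,
        (∀ (a : Fin N) (k l : A),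
          P k k * (oneTensor ((π g : Matrix B B ℂ)ᴴ) * E a) * P l l = lam a k l • P k l) ∧
        (∀ a : Fin N,
          oneTensor ((π g : Matrix B B ℂ)ᴴ) * E a * projAB =
            projAB * (oneTensor ((π g : Matrix B B ℂ)ᴴ) * E a * projAB))) := by
  simp only [hE]
  refine exists_congr fun g => ?_
  have hU := (π g).2
  simp_rw [forall_exists_sum_eq_embedAB_kronecker_iff hU,
    mul_projAB_eq_embedAB_kronecker_iff_oneTensor hU,
    exists_mul_projAB_eq_embedAB_kronecker_one_iff (sum_vecMulVec_star_eq_one_of_orthonormal hv) hP,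
    Classical.skolem, forall_and]

/-- **Group-invariant subsystems: conditions 1 and 4 are equivalent.**
Given a Kraus decomposition `Φ(ρ) = Σ_a E_a ρ E_a†` and an orthonormal basis
`{|α_k⟩}` of `H^A` with matrix units `P_{kl} = |α_k⟩⟨α_l| ⊗ 1^B` (zero on `K`),
`B` is group invariant under `Φ` iff there are `U = π g` and scalars `λ_{akl}` with
`P_{kk} (1^A ⊗ U†) E_a P_{ll} = λ_{akl} P_{kl}` for all `a, k, l` and
`(1^A ⊗ U†) E_a P^{AB} = P^{AB} (1^A ⊗ U†) E_a P^{AB}` for all `a`. -/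
theorem groupInvariant_iff_cond4
    {G : Type*} [Group G] {N : ℕ}
    [Fintype A] [Fintype B] [Fintype K] [DecidableEq A] [DecidableEq B] [DecidableEq K]
    (π : G →* Matrix.unitaryGroup B ℂ)
    (Φ : Matrix ((A × B) ⊕ K) ((A × B) ⊕ K) ℂ →ₗ[ℂ] Matrix ((A × B) ⊕ K) ((A × B) ⊕ K) ℂ)
    (hCP : IsCompletelyPositive Φ)
    (hTP : ∀ ρ, (Φ ρ).trace = ρ.trace)
    (E : Fin N → Matrix ((A × B) ⊕ K) ((A × B) ⊕ K) ℂ)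
    (hE : ∀ ρ, Φ ρ = ∑ a, E a * ρ * (E a)ᴴ)
    (v : A → (A → ℂ))
    (hv : ∀ k l : A, ∑ i : A, star (v k i) * v l i = if k = l then 1 else 0)
    (P : A → A → Matrix ((A × B) ⊕ K) ((A × B) ⊕ K) ℂ)
    (hP : ∀ k l : A,
      P k l = embedAB (Matrix.vecMulVec (v k) (star (v l)) ⊗ₖ (1 : Matrix B B ℂ))) :
    (∃ g : G, ∀ (σA : Matrix A A ℂ) (σB : Matrix B B ℂ), ∃ τA : Matrix A A ℂ,
        Φ (embedAB (σA ⊗ₖ σB)) =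
          embedAB (τA ⊗ₖ ((π g : Matrix B B ℂ) * σB * (π g : Matrix B B ℂ)ᴴ))) ↔
      (∃ g : G, ∃ lam : Fin N → A → A → ℂ,
        (∀ (a : Fin N) (k l : A),
          P k k * (oneTensor ((π g : Matrix B B ℂ)ᴴ) * E a) * P l l = lam a k l • P k l) ∧
        (∀ a : Fin N,
          oneTensor ((π g : Matrix B B ℂ)ᴴ) * E a * projAB =
            projAB * (oneTensor ((π g : Matrix B B ℂ)ᴴ) * E a * projAB))) :=
  groupInvariant_iff_cond4_general π Φ E hE v hv P hP
end
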